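/- arXiv:2312.06393 — 4 statements merged into one kernel-verified Lean document; each statement's English description precedes it below -/
import Mathlib

section
/- Let k ≥ 1 and let s_1, …, s_k be pairwise disjoint finite arithmetic progressions of integers whose union is a set X. Let s be a finite arithmetic progression with s ⊆ X, and for each i ∈ {1, …, k} let t_i = s ∩ s_i. Suppose that for some i the set t_i has at least k+1 elements. Then for any two elements x < y of t_i that are consecutive in t_i (i.e., no element of t_i lies strictly between x and y), the number of elements of s lying strictly between x and y is at most 2^(k−1) − 1. -/
/-!
In the coordinate `u ↦ m₀ + u * d` on `S`, the elements of `S ∩ s i` form a run of at least `k + 1`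
consecutive multiples of `g = (y - x) / d`; the other `k - 1` progressions `s j` avoid the run and
fill its `k` gaps. By pigeonhole every offset `0 < ρ < g` lies in two gaps for one and the same `j`,
and then `s j` misses `0` modulo `gcd (step of s j) g`: otherwise it would contain a multiple of `g`
between those two points. So the nonzero residues modulo `g` are covered by `k - 1` residue classes
modulo divisors of `g`, none containing `0`, and this forces `g ≤ 2 ^ (k - 1)`. For that, split off
a prime `q ∣ g`: the classes meeting `q ℤ` cover the nonzero residues modulo `g / q`, while the
points `W * s` (`0 < s < q`, `W` the part of `g` prime to `q`) need `q - 1 ≥ log₂ q` more classes.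
-/

def IsFinAP (S : Set ℤ) : Prop :=
  ∃ (a d : ℤ) (m : ℕ), 1 ≤ m ∧ S = {x : ℤ | ∃ i : ℕ, i < m ∧ x = a + (i : ℤ) * d}

/-- The trace of a residue class mod `φ` on an interval; it may be empty or infinite. -/
def IsProgression (φ : ℤ) (C : Set ℤ) : Prop :=
  (∀ p ∈ C, ∀ q ∈ C, φ ∣ q - p) ∧
    ∀ p ∈ C, ∀ q ∈ C, ∀ z, p ≤ z → z ≤ q → φ ∣ z - p → z ∈ C

namespace IsProgression

variable {φ : ℤ} {C : Set ℤ}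

theorem inter {ψ : ℤ} {B : Set ℤ} (hC : IsProgression φ C) (hB : IsProgression ψ B) :
    IsProgression (lcm φ ψ) (C ∩ B) :=
  ⟨fun p hp q hq => lcm_dvd (hC.1 p hp.1 q hq.1) (hB.1 p hp.2 q hq.2),
    fun p hp q hq z hpz hzq hz =>
      ⟨hC.2 p hp.1 q hq.1 z hpz hzq ((dvd_lcm_left φ ψ).trans hz),
        hB.2 p hp.2 q hq.2 z hpz hzq ((dvd_lcm_right φ ψ).trans hz)⟩⟩

theorem preimage_affine (hC : IsProgression φ C) (hφ : 0 < φ) {c d : ℤ} (hd : 0 < d) :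
    IsProgression (φ / Int.gcd φ d) ((fun u => c + u * d) ⁻¹' C) := by
  refine ⟨fun p hp q hq => ?_, fun p hp q hq z hpz hzq hz => ?_⟩
  · have hpq : p * d ≡ q * d [ZMOD φ] :=
      Int.modEq_iff_dvd.mpr (by simpa [mul_sub_right_distrib] using hC.1 _ hp _ hq)
    exact (Int.ModEq.cancel_right_div_gcd hφ hpq).dvd
  · have hdiv : φ ∣ (c + z * d) - (c + p * d) := by
      rw [← Int.ediv_mul_cancel (Int.gcd_dvd_left φ d),
        show c + z * d - (c + p * d) = (z - p) * d by ring]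
      exact mul_dvd_mul hz (Int.gcd_dvd_right φ d)
    exact hC.2 _ hp _ hq _ (by nlinarith) (by nlinarith) hdiv

theorem of_consecutive (hC : IsProgression φ C) {x y : ℤ} (hx : x ∈ C) (hy : y ∈ C) (hxy : x < y)
    (hcons : ∀ z ∈ C, ¬(x < z ∧ z < y)) : IsProgression (y - x) C := by
  have hφ : φ ∣ y - x := hC.1 x hx y hy
  have hφ0 : φ ≠ 0 := by rintro rfl; simp at hφ; omega
  have hle : x + |φ| ≤ y := by linarith [Int.le_of_dvd (by linarith) ((abs_dvd φ _).mpr hφ)]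
  have hnext : x + |φ| ∈ C := hC.2 x hx y hy _ (by simp) hle (by simp)
  have hstep : y - x = |φ| := by
    have := hcons _ hnext
    have := abs_pos.mpr hφ0
    omega
  rw [hstep]
  exact ⟨fun p hp q hq => (abs_dvd _ _).mpr (hC.1 p hp q hq),
    fun p hp q hq z hpz hzq hz => hC.2 p hp q hq z hpz hzq ((abs_dvd _ _).mp hz)⟩

theorem exists_run (hC : IsProgression φ C) (hφ : 0 < φ) (hpos : 0 < C.ncard) :
    ∃ m₀ n : ℤ, (C.ncard : ℤ) ≤ n + 1 ∧ ∀ t, 0 ≤ t → t ≤ n → m₀ + t * φ ∈ C := by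
  have hfin := Set.finite_of_ncard_pos hpos
  have hne := Set.nonempty_of_ncard_ne_zero hpos.ne'
  obtain ⟨m₀, hm₀, hmin⟩ := Set.exists_min_image C id hfin hne
  obtain ⟨M₀, hM₀, hmax⟩ := Set.exists_max_image C id hfin hne
  simp only [id_eq] at hmin hmax
  have hn0 : 0 ≤ (M₀ - m₀) / φ := Int.ediv_nonneg (sub_nonneg.mpr (hmin M₀ hM₀)) hφ.le
  refine ⟨m₀, (M₀ - m₀) / φ, ?_, fun t ht0 htn => hC.2 m₀ hm₀ M₀ hM₀ _ (by nlinarith) ?_ (by simp)⟩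
  · have hsub : C ⊆ ↑((Finset.Icc 0 ((M₀ - m₀) / φ)).image fun t => m₀ + t * φ) := by
      intro z hz
      obtain ⟨c, hc⟩ := hC.1 m₀ hm₀ z hz
      have hc0 : 0 ≤ c := by nlinarith [hmin z hz]
      have hcn : c ≤ (M₀ - m₀) / φ := (Int.le_ediv_iff_mul_le hφ).mpr (by nlinarith [hmax z hz])
      simp only [Finset.coe_image, Finset.coe_Icc, Set.mem_image, Set.mem_Icc]
      exact ⟨c, ⟨hc0, hcn⟩, by linarith⟩
    calc (C.ncard : ℤ) ≤ (Finset.Icc 0 ((M₀ - m₀) / φ)).card := by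
          exact_mod_cast (Set.ncard_le_ncard hsub (Finset.finite_toSet _)).trans
            ((Set.ncard_coe_finset _).trans_le Finset.card_image_le)
      _ = (M₀ - m₀) / φ + 1 := by
          rw [Int.card_Icc, Int.toNat_of_nonneg (by omega)]
          ring
  · have : t * φ ≤ (M₀ - m₀) / φ * φ := by nlinarith
    linarith [Int.ediv_mul_le (M₀ - m₀) hφ.ne']

theorem exists_mul_mem (hC : IsProgression φ C) {g ρ t t' : ℤ} (hρ : 0 < ρ) (hρg : ρ < g)
    (htt' : t < t') (ht : ρ + t * g ∈ C) (ht' : ρ + t' * g ∈ C) (hgcd : (Int.gcd φ g : ℤ) ∣ ρ) :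
    ∃ s, t < s ∧ s ≤ t' ∧ s * g ∈ C := by
  -- By Bezout `ρ ≡ A * g [ZMOD φ]`; as `φ ∣ (t' - t) * g`, `A` may be moved into `[1, t' - t]`.
  obtain ⟨ρ', rfl⟩ := hgcd
  set A := Int.gcdB φ g * ρ'
  have hA : φ ∣ Int.gcd φ g * ρ' - A * g :=
    ⟨Int.gcdA φ g * ρ', by rw [Int.gcd_eq_gcd_ab]; ring⟩
  set P := t' - t
  have hP : φ ∣ P * g := by simpa [P, sub_mul] using hC.1 _ ht _ ht'
  set c := (A - 1) % P + 1
  have hc1 : 1 ≤ c := by have := Int.emod_nonneg (A - 1) (by omega : P ≠ 0); omega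
  have hcP : c ≤ P := by have := Int.emod_lt_of_pos (A - 1) (by omega : 0 < P); omega
  have hcA : c * g - Int.gcd φ g * ρ' = -((A - 1) / P) * (P * g) - (Int.gcd φ g * ρ' - A * g) := by
    simp only [c, Int.emod_def]; ring
  refine ⟨t + c, by omega, by omega, hC.2 _ ht _ ht' _ (by nlinarith) (by nlinarith) ?_⟩
  rw [show (t + c) * g - (Int.gcd φ g * ρ' + t * g) = c * g - Int.gcd φ g * ρ' by ring, hcA]
  exact dvd_sub (dvd_mul_of_dvd_right hP _) hA

theorem gap_mem_sdiff {S T : Set ℤ} {d g m₀ n : ℤ} (hS : IsProgression d S)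
    (hT : IsProgression (d * g) T) (hTS : T ⊆ S) (hd : 0 < d)
    (hrun : ∀ t, 0 ≤ t → t ≤ n → m₀ + t * (d * g) ∈ T) {ρ t : ℤ} (hρ : 0 < ρ) (hρg : ρ < g)
    (ht0 : 0 ≤ t) (htn : t < n) : m₀ + (ρ + t * g) * d ∈ S \ T := by
  have hm₀ : m₀ ∈ T := by simpa using hrun 0 le_rfl (by omega)
  have hpos : 0 < ρ + t * g := by nlinarith
  have hlt : ρ + t * g < n * g := by nlinarith
  refine ⟨hS.2 _ (hTS hm₀) _ (hTS (hrun n (by omega) le_rfl)) _ (by nlinarith [mul_pos hpos hd])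
    (by nlinarith [mul_lt_mul_of_pos_right hlt hd]) (by simp), fun hz => ?_⟩
  obtain ⟨c, hc⟩ := hT.1 _ hm₀ _ hz
  have hρc : ρ = g * (c - t) := by
    have : (ρ + t * g) * d = g * c * d := by linarith
    linarith [mul_right_cancel₀ hd.ne' this]
  have := Int.le_of_dvd hρ ⟨c - t, hρc⟩
  omega

end IsProgression

theorem IsFinAP.exists_isProgression {T : Set ℤ} (hT : IsFinAP T) :
    ∃ φ, 0 < φ ∧ IsProgression φ T := by
  obtain ⟨a, d, m, hm, rfl⟩ := hT
  rcases eq_or_ne d 0 with rfl | hd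
  · refine ⟨1, one_pos, fun _ _ _ _ => one_dvd _, ?_⟩
    rintro p ⟨i, hi, rfl⟩ q ⟨i', -, rfl⟩ z hpz hzq -
    exact ⟨i, hi, by simp at hpz hzq ⊢; omega⟩
  refine ⟨|d|, abs_pos.mpr hd, ?_, ?_⟩
  · rintro p ⟨i, -, rfl⟩ q ⟨i', -, rfl⟩
    exact (abs_dvd _ _).mpr ⟨i' - i, by ring⟩
  · rintro p ⟨i, hi, rfl⟩ q ⟨i', hi', rfl⟩ z hpz hzq hz
    obtain ⟨c, hc⟩ := (abs_dvd _ _).mp hz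
    have hbetween : min (i : ℤ) i' ≤ i + c ∧ i + c ≤ max (i : ℤ) i' := by
      rcases hd.lt_or_gt with hneg | hpos
      · constructor <;> nlinarith [min_le_right (i : ℤ) i', le_max_left (i : ℤ) i']
      · constructor <;> nlinarith [min_le_left (i : ℤ) i', le_max_right (i : ℤ) i']
    refine ⟨(i + c).toNat, ?_, ?_⟩
    · omega
    · rw [Int.toNat_of_nonneg (by omega)]
      linarith

theorem Finset.exists_lt_rel_of_card_lt {ι : Type*} (J : Finset ι) (r : ℤ → ι → Prop) {n : ℤ}
    (hn : (J.card : ℤ) < n) (hcov : ∀ t, 0 ≤ t → t < n → ∃ j ∈ J, r t j) :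
    ∃ j ∈ J, ∃ t t', 0 ≤ t ∧ t < t' ∧ t' < n ∧ r t j ∧ r t' j := by
  by_contra! h
  have hle := Finset.card_le_card_of_forall_subsingleton r (s := Finset.Ico 0 n) (t := J)
    (fun t ht => by simp only [Finset.mem_Ico] at ht; exact hcov t ht.1 ht.2)
    (fun j hj t ⟨ht, hrt⟩ t' ⟨ht', hrt'⟩ => by
      rw [Finset.mem_Ico] at ht ht'
      by_contra hne
      rcases lt_or_gt_of_ne hne with hlt | hlt
      · exact h j hj t t' ht.1 hlt ht'.2 hrt hrt'
      · exact h j hj t' t ht'.1 hlt ht.2 hrt' hrt)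
  rw [Int.card_Ico] at hle
  omega

theorem ncard_between_le {S : Set ℤ} {d x : ℤ} (hS : ∀ z ∈ S, d ∣ z - x) (hd : 0 < d) (g : ℤ) :
    {z ∈ S | x < z ∧ z < x + g * d}.ncard ≤ (g - 1).toNat := by
  have hsub : {z ∈ S | x < z ∧ z < x + g * d} ⊆ ↑((Finset.Ioo 0 g).image fun c => x + c * d) := by
    rintro z ⟨hz, hxz, hzy⟩
    obtain ⟨c, hc⟩ := hS z hz
    simp only [Finset.coe_image, Finset.coe_Ioo, Set.mem_image, Set.mem_Ioo]
    exact ⟨c, ⟨by nlinarith, by nlinarith⟩, by linarith⟩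
  calc _ ≤ _ := Set.ncard_le_ncard hsub (Finset.finite_toSet _)
    _ ≤ (Finset.Ioo 0 g).card := (Set.ncard_coe_finset _).trans_le Finset.card_image_le
    _ = (g - 1).toNat := by rw [Int.card_Ioo, sub_zero]

def IsEmptyOrResidueClass (e : ℤ) (D : Set ℤ) : Prop :=
  ∀ x ∈ D, ∀ y, y ∈ D ↔ e ∣ y - x

theorem natCast_dvd_mul_iff_div_gcd_dvd {e : ℕ} (he : 0 < e) (q : ℕ) (z : ℤ) :
    (e : ℤ) ∣ q * z ↔ ((e / e.gcd q : ℕ) : ℤ) ∣ z := by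
  constructor
  · intro h
    have h' : (q : ℤ) * 0 ≡ q * z [ZMOD e] := Int.modEq_iff_dvd.mpr (by simpa using h)
    simpa [Int.gcd_natCast_natCast, Int.natCast_div] using
      (Int.ModEq.cancel_left_div_gcd (by exact_mod_cast he) h').dvd
  · rintro ⟨w, rfl⟩
    have hdvd : e ∣ e / e.gcd q * q := by
      conv_lhs => rw [← Nat.div_mul_cancel (Nat.gcd_dvd_left e q)]
      exact Nat.mul_dvd_mul_left _ (Nat.gcd_dvd_right e q)
    have := (Int.natCast_dvd_natCast.mpr hdvd).mul_right w
    rwa [Nat.cast_mul, mul_right_comm, mul_comm] at this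

section CosetCover

variable {ι : Type*} (J : Finset ι) (e : ι → ℕ) (D : ι → Set ℤ)

open Classical in
theorem Nat.Prime.sub_one_le_card_filter_of_covers {g q : ℕ} (hg : 0 < g) (hq : q.Prime)
    (hqg : q ∣ g) (he : ∀ j ∈ J, e j ∣ g) (hD : ∀ j ∈ J, IsEmptyOrResidueClass (e j) (D j))
    (h0 : ∀ j ∈ J, (0 : ℤ) ∉ D j) (hcov : ∀ x : ℤ, 0 < x → x < g → ∃ j ∈ J, x ∈ D j) :
    q - 1 ≤ (J.filter fun j => ¬∃ x : ℤ, q * x ∈ D j).card := by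
  set W := ordCompl[q] g
  have hW : ¬q ∣ W := Nat.not_dvd_ordCompl hq hg.ne'
  have hqW : (q : ℤ) * W ≤ g := by
    have hv : q ≤ q ^ g.factorization q :=
      Nat.le_self_pow (hq.factorization_pos_of_dvd hg.ne' hqg).ne' q
    have := Nat.ordProj_mul_ordCompl_eq_self g q
    exact_mod_cast (Nat.mul_le_mul_right W hv).trans this.le
  have hq_dvd_of_dvd : ∀ s : ℤ, (q : ℤ) ∣ W * s → (q : ℤ) ∣ s := fun s h =>
    ((Nat.prime_iff_prime_int.mp hq).dvd_or_dvd h).resolve_left (by exact_mod_cast hW)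
  have hq_dvd_e : ∀ j ∈ J, ∀ s : ℤ, (W : ℤ) * s ∈ D j → (q : ℤ) ∣ e j := by
    intro j hj s hs
    by_contra hqe
    have hcop : (e j).Coprime (q ^ g.factorization q) :=
      (Nat.coprime_comm.mp ((hq.coprime_iff_not_dvd).mpr (by exact_mod_cast hqe))).pow_right _
    have heW : e j ∣ W :=
      hcop.dvd_of_dvd_mul_left ((Nat.ordProj_mul_ordCompl_eq_self g q).symm ▸ he j hj)
    refine h0 j hj ((hD j hj _ hs 0).mpr ?_)
    rw [zero_sub, dvd_neg]
    exact (Int.natCast_dvd_natCast.mpr heW).mul_right s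
  have hcard := Finset.card_le_card_of_forall_subsingleton (fun (s : ℤ) j => (W : ℤ) * s ∈ D j)
    (s := Finset.Ioo 0 (q : ℤ)) (t := J.filter fun j => ¬∃ x : ℤ, q * x ∈ D j) ?_ ?_
  · rwa [Int.card_Ioo, sub_zero, show (q : ℤ) - 1 = ((q - 1 : ℕ) : ℤ) by
      have := hq.one_lt; omega, Int.toNat_natCast] at hcard
  · intro s hs
    rw [Finset.mem_Ioo] at hs
    have hWpos : (0 : ℤ) < W := by exact_mod_cast Nat.ordCompl_pos q hg.ne'
    obtain ⟨j, hj, hsj⟩ := hcov (W * s) (mul_pos hWpos hs.1) (by nlinarith)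
    refine ⟨j, Finset.mem_filter.mpr ⟨hj, ?_⟩, hsj⟩
    rintro ⟨x, hx⟩
    have hqs : (q : ℤ) ∣ W * s := by
      have := (hq_dvd_e j hj s hsj).trans ((hD j hj _ hx _).mp hsj)
      simpa using this.add (dvd_mul_right (q : ℤ) x)
    have := Int.le_of_dvd hs.1 (hq_dvd_of_dvd s hqs)
    omega
  · rintro j hj s ⟨hs, hsj⟩ s' ⟨hs', hs'j⟩
    rw [Finset.mem_Ioo] at hs hs'
    have hdiff : (q : ℤ) ∣ W * (s' - s) := by
      rw [mul_sub]
      exact (hq_dvd_e j (Finset.mem_filter.mp hj).1 s hsj).trans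
        ((hD j (Finset.mem_filter.mp hj).1 _ hsj _).mp hs'j)
    have := Int.eq_zero_of_abs_lt_dvd (hq_dvd_of_dvd _ hdiff) (by rw [abs_lt]; omega)
    omega

theorem le_two_pow_card_of_covers (g : ℕ) (hg : 0 < g) (he : ∀ j ∈ J, e j ∣ g)
    (hD : ∀ j ∈ J, IsEmptyOrResidueClass (e j) (D j)) (h0 : ∀ j ∈ J, (0 : ℤ) ∉ D j)
    (hcov : ∀ x : ℤ, 0 < x → x < g → ∃ j ∈ J, x ∈ D j) :
    g ≤ 2 ^ J.card := by
  induction g using Nat.strong_induction_on generalizing J e D with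
  | _ g ih =>
  classical
  obtain rfl | hg1 := (Nat.one_le_iff_ne_zero.mpr hg.ne').eq_or_lt
  · exact Nat.one_le_two_pow
  obtain ⟨q, hq, hq_dvd⟩ := Nat.exists_prime_and_dvd (show g ≠ 1 by omega)
  have hqg : q * (g / q) = g := Nat.mul_div_cancel' hq_dvd
  have he_pos : ∀ j ∈ J, 0 < e j := fun j hj => Nat.pos_of_dvd_of_pos (he j hj) hg
  have hlost := hq.sub_one_le_card_filter_of_covers J e D hg hq_dvd he hD h0 hcov
  set Js := J.filter fun j => ∃ x : ℤ, q * x ∈ D j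
  have hred : g / q ≤ 2 ^ Js.card := by
    refine ih (g / q) (Nat.div_lt_self hg hq.one_lt) Js (fun j => e j / (e j).gcd q)
      (fun j => (fun x => (q : ℤ) * x) ⁻¹' D j) (Nat.div_pos (Nat.le_of_dvd hg hq_dvd) hq.pos)
      ?_ ?_ ?_ ?_
    · intro j hj
      have hj := (Finset.mem_filter.mp hj).1
      have : (e j : ℤ) ∣ q * (g / q : ℕ) := by exact_mod_cast hqg ▸ he j hj
      exact_mod_cast (natCast_dvd_mul_iff_div_gcd_dvd (he_pos j hj) q _).mp this
    · intro j hj x hx y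
      have hj := (Finset.mem_filter.mp hj).1
      rw [← natCast_dvd_mul_iff_div_gcd_dvd (he_pos j hj), mul_sub]
      exact hD j hj _ hx _
    · intro j hj
      simpa using h0 j (Finset.mem_filter.mp hj).1
    · intro x hx0 hxg
      obtain ⟨j, hj, hxj⟩ := hcov (q * x) (mul_pos (by exact_mod_cast hq.pos) hx0) <|
        calc (q : ℤ) * x < q * (g / q : ℕ) := mul_lt_mul_of_pos_left hxg (by exact_mod_cast hq.pos)
          _ = g := by exact_mod_cast hqg
      exact ⟨j, Finset.mem_filter.mpr ⟨hj, x, hxj⟩, hxj⟩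
  have hsplit : Js.card + (J.filter fun j => ¬∃ x : ℤ, q * x ∈ D j).card = J.card :=
    Finset.card_filter_add_card_filter_not _
  have hq_le : q ≤ 2 ^ (q - 1) := by have := Nat.lt_two_pow_self (n := q - 1); omega
  calc g = q * (g / q) := hqg.symm
    _ ≤ 2 ^ (q - 1) * 2 ^ Js.card := Nat.mul_le_mul hq_le hred
    _ = 2 ^ (q - 1 + Js.card) := (pow_add 2 _ _).symm
    _ ≤ 2 ^ J.card := Nat.pow_le_pow_right (by norm_num) (by omega)

end CosetCover

theorem le_two_pow_card_of_gaps_covered {ι : Type*} (J : Finset ι) (C : ι → Set ℤ) (φ : ι → ℤ)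
    (hC : ∀ j ∈ J, IsProgression (φ j) (C j)) {g n : ℤ} (hg : 0 < g) (hn : (J.card : ℤ) < n)
    (havoid : ∀ j ∈ J, ∀ t, 0 ≤ t → t ≤ n → t * g ∉ C j)
    (hcov : ∀ ρ, 0 < ρ → ρ < g → ∀ t, 0 ≤ t → t < n → ∃ j ∈ J, ρ + t * g ∈ C j) :
    g ≤ 2 ^ J.card := by
  classical
  set e : ι → ℕ := fun j => Int.gcd (φ j) g
  set D : ι → Set ℤ := fun j => {x | ∃ c ∈ C j, (e j : ℤ) ∣ x - c}
  have he : ∀ j, (e j : ℤ) ∣ g := fun j => Int.gcd_dvd_right _ _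
  have hD : ∀ j ∈ J, IsEmptyOrResidueClass (e j) (D j) := by
    rintro j hj x ⟨c, hc, hxc⟩ y
    refine ⟨fun ⟨c', hc', hyc'⟩ => ?_, fun hyx => ⟨c, hc, by simpa using hyx.add hxc⟩⟩
    have hcc' : (e j : ℤ) ∣ c' - c := (Int.gcd_dvd_left _ _).trans ((hC j hj).1 c hc c' hc')
    simpa using (hyc'.add hcc').sub hxc
  have hgood : ∀ ρ, 0 < ρ → ρ < g → ∃ j ∈ J, ρ ∈ D j ∧ (0 : ℤ) ∉ D j := by
    intro ρ hρ hρg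
    obtain ⟨j, hj, t, t', ht, htt', ht'n, hmem, hmem'⟩ :=
      J.exists_lt_rel_of_card_lt (fun t j => ρ + t * g ∈ C j) hn (hcov ρ hρ hρg)
    have hρ_mem : ρ ∈ D j := ⟨_, hmem, by simpa using ((he j).mul_left t).neg_right⟩
    refine ⟨j, hj, hρ_mem, fun h0 => ?_⟩
    have hρe : (e j : ℤ) ∣ ρ := by
      simpa using ((hD j hj _ h0 ρ).mp hρ_mem)
    obtain ⟨s, hts, hst', hs⟩ := (hC j hj).exists_mul_mem hρ hρg htt' hmem hmem' hρe
    exact havoid j hj s (by omega) (by omega) hs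
  have hcard := le_two_pow_card_of_covers (J.filter fun j => (0 : ℤ) ∉ D j) e D g.natAbs
    (by omega) (fun j _ => Int.natCast_dvd.mp (he j))
    (fun j hj => hD j (Finset.mem_filter.mp hj).1) (fun j hj => (Finset.mem_filter.mp hj).2)
    (fun ρ hρ hρg => by
      obtain ⟨j, hj, hρj, h0⟩ := hgood ρ hρ (by omega)
      exact ⟨j, Finset.mem_filter.mpr ⟨hj, h0⟩, hρj⟩)
  have := hcard.trans (Nat.pow_le_pow_right (by norm_num) (Finset.card_filter_le J _))
  have hcast : ((2 ^ J.card : ℕ) : ℤ) = 2 ^ J.card := by push_cast; rfl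
  omega

theorem xcap_structural_lemma_general (k : ℕ) (s : Fin k → Set ℤ)
    (hAP : ∀ i : Fin k, IsFinAP (s i))
    (hdisj : ∀ i j : Fin k, i ≠ j → Disjoint (s i) (s j))
    (X : Set ℤ) (hX : X = ⋃ i, s i)
    (S : Set ℤ) (hS : IsFinAP S) (hsub : S ⊆ X)
    (i : Fin k) (hbig : k + 1 ≤ (S ∩ s i).ncard)
    (x y : ℤ) (hx : x ∈ S ∩ s i) (hy : y ∈ S ∩ s i) (hxy : x < y)
    (hcons : ∀ z ∈ S ∩ s i, ¬(x < z ∧ z < y)) :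
    {z ∈ S | x < z ∧ z < y}.ncard ≤ 2 ^ (k - 1) - 1 := by
  subst hX
  obtain ⟨d, hd, hSd⟩ := hS.exists_isProgression
  choose φ hφ hsφ using fun j => (hAP j).exists_isProgression
  have hT : IsProgression (y - x) (S ∩ s i) := (hSd.inter (hsφ i)).of_consecutive hx hy hxy hcons
  obtain ⟨g, hg⟩ : d ∣ y - x := hSd.1 x hx.1 y hy.1
  have hg0 : 0 < g := pos_of_mul_pos_right (hg ▸ sub_pos.mpr hxy) hd.le
  rw [hg] at hT
  obtain ⟨m₀, n, hn, hrun⟩ := hT.exists_run (by nlinarith) (by omega)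
  have hgap : g ≤ 2 ^ (k - 1) := by
    have hcard : (Finset.univ.erase i).card = k - 1 := by
      rw [Finset.card_erase_of_mem (Finset.mem_univ i), Finset.card_univ, Fintype.card_fin]
    rw [← hcard]
    refine le_two_pow_card_of_gaps_covered _ (fun j => (fun u => m₀ + u * d) ⁻¹' s j)
      (fun j => φ j / Int.gcd (φ j) d) (fun j _ => (hsφ j).preimage_affine (hφ j) hd) hg0
      (n := n) (by have := i.pos; omega) ?_ ?_
    · intro j hj t ht0 htn hmem
      refine Set.disjoint_left.mp (hdisj j i (Finset.ne_of_mem_erase hj)) hmem ?_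
      simpa [mul_comm, mul_left_comm] using (hrun t ht0 htn).2
    · intro ρ hρ hρg t ht0 htn
      obtain ⟨hzS, hzT⟩ := hSd.gap_mem_sdiff hT Set.inter_subset_left hd hrun hρ hρg ht0 htn
      obtain ⟨j, hj⟩ := Set.mem_iUnion.mp (hsub hzS)
      exact ⟨j, Finset.mem_erase.mpr ⟨by rintro rfl; exact hzT ⟨hzS, hj⟩, Finset.mem_univ j⟩, hj⟩
  have hcount := ncard_between_le (fun z hz => hSd.1 x hx.1 z hz) hd g
  rw [show x + g * d = y by linarith] at hcount
  have hcast : ((2 ^ (k - 1) : ℕ) : ℤ) = 2 ^ (k - 1) := by push_cast; rfl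
  omega

/-- Lemma 2: let `s_1, …, s_k` (`k ≥ 1`) be pairwise disjoint
finite APs with union `X`, let `s ⊆ X` be a finite AP and `t_i = s ∩ s_i`.
If some `t_i` has at least `k+1` elements, then between any two consecutive
elements of `t_i` there are at most `2^(k−1) − 1` elements of `s`. -/
theorem xcap_structural_lemma (k : ℕ) (hk : 1 ≤ k) (s : Fin k → Set ℤ)
    (hAP : ∀ i : Fin k, IsFinAP (s i))
    (hdisj : ∀ i j : Fin k, i ≠ j → Disjoint (s i) (s j))
    (X : Set ℤ) (hX : X = ⋃ i, s i)
    (S : Set ℤ) (hS : IsFinAP S) (hsub : S ⊆ X)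
    (i : Fin k) (hbig : k + 1 ≤ (S ∩ s i).ncard)
    (x y : ℤ) (hx : x ∈ S ∩ s i) (hy : y ∈ S ∩ s i) (hxy : x < y)
    (hcons : ∀ z ∈ S ∩ s i, ¬(x < z ∧ z < y)) :
    {z ∈ S | x < z ∧ z < y}.ncard ≤ 2 ^ (k - 1) - 1 :=
  xcap_structural_lemma_general k s hAP hdisj X hX S hS hsub i hbig x y hx hy hxy hcons
end

section
/- Define x_1 = 0 and x_i = 2^(i−2) for 2 ≤ i ≤ n+2. For every polynomial p with nonnegative integer coefficients there exists an integer n such that there is no function a : {1, …, n+2} → ℕ satisfying both: (i) a_i ≤ p(n) for all i ∈ {1, …, n+2}; and (ii) for all pairwise distinct indices i, j, k ∈ {1, …, n+2}, the triple {x_i, x_j, x_k} forms a 3-term arithmetic progression if and only if the triple {a_i, a_j, a_k} forms a 3-term arithmetic progression. -/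
/-!
Take `n = 2k` and measure everything from the first point: put `b i = a (i + 1) - a 0`.
Since `{0, 2^i, 2^j}` is a 3-AP exactly when `|i - j| = 1`, consecutive `b`'s satisfy
`b (i+1) ∈ {-b i, 2 b i, b i / 2}` while non-consecutive ones do not. Hence all `|b i|` have the
same odd part and are nonzero, and `|b i| ≠ |b j|` for `i + 2 ≤ j < n` (if `b j = ± b i`, then
`b i` would be related to `b j` or to `b (j+1)`). So `|b 0|, |b 2|, …, |b (2k-2)|` have pairwise
distinct 2-adic valuations and one of them is at least `2^(k-1)`, whereas `|b i| ≤ p(2k)` is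
eventually smaller.
-/

/-- `{u, v, w}` forms a 3-term arithmetic progression: some ordering has equal
consecutive differences, i.e. `2u = v + w` or `2v = u + w` or `2w = u + v`. -/
def IsAP3 (u v w : ℕ) : Prop :=
  2 * u = v + w ∨ 2 * v = u + w ∨ 2 * w = u + v

/-- The sequence `x_1 = 0`, `x_i = 2^(i−2)` for `i ≥ 2`, indexed by
`Fin (n+2)` (index `0` corresponds to `x_1`). -/
def xSeq (i : ℕ) : ℕ := if i = 0 then 0 else 2 ^ (i - 1)

open Polynomial Filter Asymptotics Fin.NatCast

def IsAP3WithZero (x y : ℤ) : Prop :=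
  x + y = 0 ∨ 2 * x = y ∨ 2 * y = x

theorem isAP3_iff_isAP3WithZero (u v w : ℕ) :
    IsAP3 u v w ↔ IsAP3WithZero ((v : ℤ) - u) ((w : ℤ) - u) := by
  unfold IsAP3 IsAP3WithZero
  omega

theorem isAP3WithZero_two_pow_iff (i j : ℕ) :
    IsAP3WithZero (2 ^ i) (2 ^ j) ↔ j = i + 1 ∨ i = j + 1 := by
  have hinj := pow_right_injective₀ (M₀ := ℤ) two_pos (by norm_num)
  simp only [IsAP3WithZero, ← pow_succ']
  constructor
  · rintro (h | h | h)
    · exact absurd h (by positivity)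
    · exact Or.inl (hinj h).symm
    · exact Or.inr (hinj h).symm
  · rintro (rfl | rfl) <;> simp

theorem IsAP3WithZero.ordCompl_natAbs_eq {x y : ℤ} (h : IsAP3WithZero x y) :
    ordCompl[2] x.natAbs = ordCompl[2] y.natAbs := by
  have hdouble (m : ℕ) : ordCompl[2] (2 * m) = ordCompl[2] m := by
    simpa using Nat.ordCompl_self_pow_mul m 1 Nat.prime_two
  rcases h with h | rfl | rfl
  · rw [eq_neg_of_add_eq_zero_right h, Int.natAbs_neg]
  · rw [Int.natAbs_mul]; exact (hdouble _).symm
  · rw [Int.natAbs_mul]; exact hdouble _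

theorem Int.eq_zero_of_ordCompl_natAbs_eq_zero {p : ℕ} {x : ℤ} (h : ordCompl[p] x.natAbs = 0) :
    x = 0 := by
  by_contra hx
  exact (Nat.ordCompl_pos p (Int.natAbs_ne_zero.2 hx)).ne' h

section Chain

variable {b : ℕ → ℤ} {n : ℕ}

theorem ordCompl_natAbs_eq_of_chain (hstep : ∀ i < n, IsAP3WithZero (b i) (b (i + 1))) :
    ∀ i ≤ n, ordCompl[2] (b i).natAbs = ordCompl[2] (b 0).natAbs
  | 0, _ => rfl
  | i + 1, hi => (hstep i (by omega)).ordCompl_natAbs_eq.symm.trans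
      (ordCompl_natAbs_eq_of_chain hstep i (by omega))

theorem ne_zero_of_chain (hstep : ∀ i < n, IsAP3WithZero (b i) (b (i + 1)))
    (hskip : ∀ i j, i + 2 ≤ j → j ≤ n → ¬ IsAP3WithZero (b i) (b j))
    (hn : 2 ≤ n) {i : ℕ} (hi : i ≤ n) : b i ≠ 0 := by
  intro hbi
  have hcompl := ordCompl_natAbs_eq_of_chain hstep
  have hb0 : b 0 = 0 := Int.eq_zero_of_ordCompl_natAbs_eq_zero <| by
    rw [← hcompl i hi, hbi, Int.natAbs_zero, Nat.zero_div]
  have hb2 : b 2 = 0 := Int.eq_zero_of_ordCompl_natAbs_eq_zero <| by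
    rw [hcompl 2 hn, hb0, Int.natAbs_zero, Nat.zero_div]
  exact hskip 0 2 le_rfl hn (Or.inl (by simp [hb0, hb2]))

theorem natAbs_ne_of_chain (hstep : ∀ i < n, IsAP3WithZero (b i) (b (i + 1)))
    (hskip : ∀ i j, i + 2 ≤ j → j ≤ n → ¬ IsAP3WithZero (b i) (b j))
    {i j : ℕ} (hij : i + 2 ≤ j) (hj : j < n) :
    (b i).natAbs ≠ (b j).natAbs := by
  intro h
  rcases Int.natAbs_eq_natAbs_iff.1 h with h | h
  · exact hskip i (j + 1) (by omega) hj (h ▸ hstep j hj)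
  · exact hskip i j hij hj.le (Or.inl (by rw [h]; ring))

theorem factorization_natAbs_ne_of_chain (hstep : ∀ i < n, IsAP3WithZero (b i) (b (i + 1)))
    (hskip : ∀ i j, i + 2 ≤ j → j ≤ n → ¬ IsAP3WithZero (b i) (b j))
    {i j : ℕ} (hij : i + 2 ≤ j) (hj : j < n) :
    (b i).natAbs.factorization 2 ≠ (b j).natAbs.factorization 2 := by
  intro h
  apply natAbs_ne_of_chain hstep hskip hij hj
  have hcompl := ordCompl_natAbs_eq_of_chain hstep
  rw [← Nat.ordProj_mul_ordCompl_eq_self (b i).natAbs 2,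
    ← Nat.ordProj_mul_ordCompl_eq_self (b j).natAbs 2, hcompl i (by omega), hcompl j hj.le, h]

theorem exists_two_pow_le_natAbs_of_chain {k : ℕ}
    (hstep : ∀ i < 2 * k, IsAP3WithZero (b i) (b (i + 1)))
    (hskip : ∀ i j, i + 2 ≤ j → j ≤ 2 * k → ¬ IsAP3WithZero (b i) (b j)) (hk : 1 ≤ k) :
    ∃ i ≤ 2 * k, 2 ^ (k - 1) ≤ (b i).natAbs := by
  obtain ⟨t, ht, hv⟩ : ∃ t < k, k - 1 ≤ (b (2 * t)).natAbs.factorization 2 := by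
    by_contra! hsmall
    obtain ⟨s, hs, t, ht, hst, heq⟩ := Finset.exists_ne_map_eq_of_card_lt_of_maps_to
      (s := Finset.range k) (t := Finset.range (k - 1)) (by simp; omega)
      (f := fun t => (b (2 * t)).natAbs.factorization 2)
      (fun t ht => by simpa using hsmall t (by simpa using ht))
    simp only [Finset.mem_range] at hs ht
    rcases hst.lt_or_gt with hlt | hlt
    · exact factorization_natAbs_ne_of_chain hstep hskip (by omega) (by omega) heq
    · exact factorization_natAbs_ne_of_chain hstep hskip (by omega) (by omega) heq.symm
  refine ⟨2 * t, by omega, ?_⟩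
  calc 2 ^ (k - 1) ≤ 2 ^ (b (2 * t)).natAbs.factorization 2 := Nat.pow_le_pow_right two_pos hv
    _ ≤ (b (2 * t)).natAbs :=
      Nat.ordProj_le 2 (Int.natAbs_ne_zero.2 (ne_zero_of_chain hstep hskip (by omega) (by omega)))

end Chain

theorem Polynomial.eventually_eval_lt_two_pow (q : ℕ[X]) :
    ∀ᶠ k : ℕ in atTop, q.eval k < 2 ^ k := by
  have hdeg : (q.map (Nat.castRingHom ℝ)).degree ≤ (X ^ q.natDegree : ℝ[X]).degree := by
    rw [degree_X_pow]; exact degree_map_le.trans degree_le_natDegree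
  have hO : (fun k : ℕ => ((q.eval k : ℕ) : ℝ)) =O[atTop]
      fun k : ℕ => (k : ℝ) ^ q.natDegree := by
    simpa [Function.comp_def, eval_map] using
      (isBigO_atTop_of_degree_le _ _ hdeg).comp_tendsto tendsto_natCast_atTop_atTop
  have ho := hO.trans_isLittleO (isLittleO_pow_const_const_pow_of_one_lt q.natDegree one_lt_two)
  filter_upwards [ho.bound one_half_pos] with k hk
  have hreal : ((q.eval k : ℕ) : ℝ) < 2 ^ k := by
    simp only [Real.norm_natCast, norm_pow, Real.norm_ofNat] at hk
    linarith [pow_pos (two_pos : (0 : ℝ) < 2) k]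
  exact_mod_cast hreal

theorem isAP3WithZero_sub_iff_of_preserves {n : ℕ} {a : Fin (n + 2) → ℕ}
    (hap : ∀ i j l : Fin (n + 2), i ≠ j → j ≠ l → i ≠ l →
      (IsAP3 (xSeq i) (xSeq j) (xSeq l) ↔ IsAP3 (a i) (a j) (a l)))
    {i j : ℕ} (hi : i ≤ n) (hj : j ≤ n) (hij : i ≠ j) :
    IsAP3WithZero ((a (i + 1 : ℕ) : ℤ) - a 0) ((a (j + 1 : ℕ) : ℤ) - a 0) ↔
      j = i + 1 ∨ i = j + 1 := by
  have hval {m : ℕ} (hm : m ≤ n) : ((m + 1 : ℕ) : Fin (n + 2)).val = m + 1 := by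
    rw [Fin.val_natCast, Nat.mod_eq_of_lt (by omega)]
  have h := hap 0 (i + 1 : ℕ) (j + 1 : ℕ) (Fin.ne_of_val_ne (by rw [hval hi]; simp))
    (Fin.ne_of_val_ne (by rw [hval hi, hval hj]; omega)) (Fin.ne_of_val_ne (by rw [hval hj]; simp))
  rw [hval hi, hval hj, isAP3_iff_isAP3WithZero, isAP3_iff_isAP3WithZero] at h
  rw [← isAP3WithZero_two_pow_iff]
  simpa [xSeq] using h.symm

/-- Lemma 3: for every polynomial `p` with nonnegative integer
coefficients there is an `n` such that no function `a : {1,…,n+2} → ℕ` with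
`a_i ≤ p(n)` preserves exactly the 3-term APs of `x_1, …, x_{n+2}`. -/
theorem no_small_ap_preserving_replacement (p : Polynomial ℕ) :
    ∃ n : ℕ, ¬ ∃ a : Fin (n + 2) → ℕ,
      (∀ i : Fin (n + 2), a i ≤ p.eval n) ∧
      (∀ i j l : Fin (n + 2), i ≠ j → j ≠ l → i ≠ l →
        (IsAP3 (xSeq i) (xSeq j) (xSeq l) ↔ IsAP3 (a i) (a j) (a l))) := by
  obtain ⟨k, hlt, hk⟩ :=
    ((eventually_eval_lt_two_pow (C 2 * p.comp (C 2 * X))).and (eventually_ge_atTop 1)).exists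
  simp only [eval_mul, eval_C, eval_comp, eval_X] at hlt
  refine ⟨2 * k, fun ⟨a, ha_le, hap⟩ => ?_⟩
  have hb {i j : ℕ} (hi : i ≤ 2 * k) (hj : j ≤ 2 * k) (hij : i ≠ j) :=
    isAP3WithZero_sub_iff_of_preserves hap hi hj hij
  obtain ⟨i, hi, hbig⟩ := exists_two_pow_le_natAbs_of_chain
    (fun i hi => (hb hi.le hi (by omega)).2 (Or.inl rfl))
    (fun i j hij hj => by rw [hb (by omega) hj (by omega)]; omega) hk
  have hpow : 2 ^ k = 2 * 2 ^ (k - 1) := by rw [← pow_succ']; congr 1; omega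
  have ha_i := ha_le (i + 1 : ℕ)
  have ha_0 := ha_le 0
  omega
end

section
/- Let p be a prime and let S be a finite set of integers such that: (i) for all distinct x, y ∈ S, p does not divide x − y; and (ii) for all x, y, z ∈ S, either 2x − y − z = 0 or p does not divide 2x − y − z. Then for every subset A ⊆ S, the set A is a finite arithmetic progression in ℤ if and only if the set of residues {a mod p : a ∈ A} ⊆ ℤ/pℤ is an arithmetic progression in ℤ/pℤ. -/
/-- An arithmetic progression in `ℤ/pℤ`: a set of the form
`{α + i·δ : 0 ≤ i ≤ m−1}` for some `α, δ : ZMod p` and `m ≥ 1`. -/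
def IsAPZMod (p : ℕ) (S : Set (ZMod p)) : Prop :=
  ∃ (α δ : ZMod p) (m : ℕ), 1 ≤ m ∧
    S = {x : ZMod p | ∃ i : ℕ, i < m ∧ x = α + (i : ZMod p) * δ}

/-- if `p` is a prime such that `p ∤ x − y` for distinct
`x, y ∈ S` and for all `x, y, z ∈ S` either `2x − y − z = 0` or
`p ∤ 2x − y − z`, then a subset `A ⊆ S` is a finite AP in ℤ iff its set of
residues mod `p` is an AP in `ℤ/pℤ`. -/
theorem mod_p_preserves_APs (p : ℕ) (hp : p.Prime) (S : Finset ℤ)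
    (h1 : ∀ x ∈ S, ∀ y ∈ S, x ≠ y → ¬ ((p : ℤ) ∣ (x - y)))
    (h2 : ∀ x ∈ S, ∀ y ∈ S, ∀ z ∈ S,
      2 * x - y - z = 0 ∨ ¬ ((p : ℤ) ∣ (2 * x - y - z)))
    (A : Finset ℤ) (hA : A ⊆ S) :
    IsFinAP (↑A : Set ℤ) ↔
      IsAPZMod p ((fun x : ℤ => (x : ZMod p)) '' (↑A : Set ℤ)) := by
  -- injectivity of reduction mod p on S
  have hinj : ∀ x ∈ S, ∀ y ∈ S, (x : ZMod p) = (y : ZMod p) → x = y := by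
    intro x hx y hy hxy
    by_contra hne
    apply h1 x hx y hy hne
    have hz : ((x - y : ℤ) : ZMod p) = 0 := by push_cast; rw [hxy]; ring
    exact (ZMod.intCast_zmod_eq_zero_iff_dvd _ p).mp hz
  constructor
  · rintro ⟨a, d, m, hm, hAset⟩
    refine ⟨(a : ZMod p), (d : ZMod p), m, hm, ?_⟩
    ext x
    simp only [Set.mem_image, hAset, Set.mem_setOf_eq]
    constructor
    · rintro ⟨y, ⟨i, him, rfl⟩, rfl⟩
      exact ⟨i, him, by push_cast; ring⟩
    · rintro ⟨i, him, rfl⟩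
      exact ⟨a + (i : ℤ) * d, ⟨i, him, rfl⟩, by push_cast; ring⟩
  · rintro ⟨α, δ, m, hm, hset⟩
    -- choose preimages of the AP elements
    have hex : ∀ i : ℕ, ∃ a : ℤ,
        i < m → a ∈ A ∧ (a : ZMod p) = α + (i : ZMod p) * δ := by
      intro i
      by_cases hi : i < m
      · have hmem : (α + (i : ZMod p) * δ) ∈
            (fun x : ℤ => (x : ZMod p)) '' (↑A : Set ℤ) := by
          rw [hset]; exact ⟨i, hi, rfl⟩
        obtain ⟨a, haA, hav⟩ := hmem
        exact ⟨a, fun _ => ⟨haA, hav⟩⟩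
      · exact ⟨0, fun h => absurd h hi⟩
    choose b hb using hex
    set d : ℤ := b 1 - b 0 with hd
    -- the three-term relation via h2
    have hrel : ∀ i : ℕ, i + 2 < m → b (i + 2) = 2 * b (i + 1) - b i := by
      intro i h
      have h0 : i < m := by omega
      have h1' : i + 1 < m := by omega
      have e0 := (hb i h0).2
      have e1 := (hb (i + 1) h1').2
      have e2 := (hb (i + 2) h).2
      have hz : ((2 * b (i + 1) - b i - b (i + 2) : ℤ) : ZMod p) = 0 := by
        push_cast
        rw [e0, e1, e2]
        push_cast
        ring
      have hdvd : (p : ℤ) ∣ (2 * b (i + 1) - b i - b (i + 2)) :=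
        (ZMod.intCast_zmod_eq_zero_iff_dvd _ p).mp hz
      have := h2 (b (i + 1)) (hA (hb (i + 1) h1').1) (b i) (hA (hb i h0).1)
        (b (i + 2)) (hA (hb (i + 2) h).1)
      rcases this with h' | h'
      · linarith
      · exact absurd hdvd h'
    have claim1 : ∀ i : ℕ, i + 1 < m → b (i + 1) = b i + d := by
      intro i
      induction i with
      | zero => intro _; rw [hd]; ring
      | succ k ih =>
        intro h
        have hk : k + 1 < m := by omega
        have := hrel k (by omega)
        have := ih hk
        linarith
    have claim2 : ∀ i : ℕ, i < m → b i = b 0 + (i : ℤ) * d := by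
      intro i
      induction i with
      | zero => intro _; simp
      | succ k ih =>
        intro h
        have hk : k < m := by omega
        rw [claim1 k h, ih hk]
        push_cast
        ring
    refine ⟨b 0, d, m, hm, ?_⟩
    ext x
    simp only [Finset.coe_sort_coe, Set.mem_setOf_eq, Finset.mem_coe]
    constructor
    · intro hx
      have hmem : (x : ZMod p) ∈ (fun y : ℤ => (y : ZMod p)) '' (↑A : Set ℤ) :=
        ⟨x, hx, rfl⟩
      rw [hset] at hmem
      obtain ⟨i, hi, hxv⟩ := hmem
      refine ⟨i, hi, ?_⟩
      have hbx : x = b i := by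
        apply hinj x (hA hx) (b i) (hA (hb i hi).1)
        rw [hxv, (hb i hi).2]
      rw [hbx, claim2 i hi]
    · rintro ⟨i, hi, rfl⟩
      rw [← claim2 i hi]
      exact (hb i hi).1
end

section
/- Let U be a finite set with |U| = n, let t be an integer with 1 ≤ t ≤ n, and let 𝒮 be a family of subsets of U that contains every subset of U of size exactly t. Let k ≥ 0 and s ≥ 0 be integers, and suppose there exist sets S_1, …, S_s ∈ 𝒮 with |S_1 ∪ … ∪ S_s| ≥ s·t + t·k. Then there exist at most ⌈n/t⌉ − k sets in 𝒮 whose union is U. -/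
/-! Let `W = S_1 ∪ ⋯ ∪ S_s`. Since `|W| ≥ (s + k) t`, the rest `U \ W` has at most
`(⌈n/t⌉ - k - s) t` elements, so it is covered by that many `t`-subsets of `U`: peel off `t` of
its elements at a time, padding the last piece inside `U` (possible as `t ≤ n`). Together with
the `s` given sets this covers `U` with at most `⌈n/t⌉ - k` sets. -/

open Finset

section

variable {α : Type*} [DecidableEq α]

theorem univ_biUnion_fin_cons {n : ℕ} (A : Finset α) (C : Fin n → Finset α) :
    univ.biUnion (Fin.cons A C : Fin (n + 1) → Finset α) = A ∪ univ.biUnion C := by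
  ext x
  simp [Fin.exists_fin_succ]

theorem univ_biUnion_fin_append {m n : ℕ} (C : Fin m → Finset α) (D : Fin n → Finset α) :
    univ.biUnion (Fin.append C D) = univ.biUnion C ∪ univ.biUnion D := by
  ext x
  simp only [mem_union, mem_biUnion, mem_univ, true_and]
  constructor
  · rintro ⟨i, hi⟩
    induction i using Fin.addCases with
    | left i => exact .inl ⟨i, by simpa using hi⟩
    | right j => exact .inr ⟨j, by simpa using hi⟩
  · rintro (⟨i, hi⟩ | ⟨j, hj⟩)
    · exact ⟨Fin.castAdd n i, by simpa using hi⟩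
    · exact ⟨Fin.natAdd m j, by simpa using hj⟩

theorem exists_fin_cover_of_card_le_mul {U V : Finset α} {t : ℕ} (htU : t ≤ #U) (hVU : V ⊆ U)
    {q : ℕ} (hV : #V ≤ q * t) :
    ∃ C : Fin q → Finset α, (∀ i, C i ⊆ U ∧ #(C i) = t) ∧ V ⊆ univ.biUnion C := by
  induction q generalizing V with
  | zero =>
    have hV0 : V = ∅ := card_eq_zero.mp (by simpa using hV)
    exact ⟨Fin.elim0, fun i => i.elim0, by simp [hV0]⟩
  | succ q ih =>
    obtain ⟨B, hBV, hB⟩ := exists_subset_card_eq (min_le_left #V t)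
    obtain ⟨A, hBA, hAU, hA⟩ :=
      exists_subsuperset_card_eq (hBV.trans hVU) (hB ▸ min_le_right _ _) htU
    have hrest : #(V \ A) ≤ q * t := by
      have : #(V \ A) ≤ #(V \ B) := card_le_card (sdiff_subset_sdiff le_rfl hBA)
      rw [card_sdiff_of_subset hBV, hB] at this
      rw [add_mul, one_mul] at hV
      omega
    obtain ⟨C, hCU, hVC⟩ := ih (sdiff_subset.trans hVU) hrest
    refine ⟨Fin.cons A C, Fin.forall_fin_succ.mpr ⟨?_, ?_⟩, ?_⟩
    · simpa using ⟨hAU, hA⟩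
    · simpa using hCU
    · rw [univ_biUnion_fin_cons]
      exact sdiff_le_iff.mp hVC

end

/-- let `𝒮` be a family of subsets of a finite universe `U` of
size `n`, containing every subset of `U` of size exactly `t` (`1 ≤ t ≤ n`).
If some `S_1, …, S_s ∈ 𝒮` satisfy `|S_1 ∪ … ∪ S_s| ≥ s·t + t·k`, then `U`
can be covered by at most `⌈n/t⌉ − k` sets of `𝒮`. -/
theorem uniform_set_cover_below_guarantee {α : Type*} [DecidableEq α]
    (U : Finset α) (n : ℕ) (hn : U.card = n) (t : ℕ) (ht1 : 1 ≤ t)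
    (htn : t ≤ n) (𝒮 : Set (Finset α))
    (hsub : ∀ A ∈ 𝒮, A ⊆ U)
    (huniform : ∀ A : Finset α, A ⊆ U → A.card = t → A ∈ 𝒮)
    (k s : ℕ) (S : Fin s → Finset α) (hS : ∀ i, S i ∈ 𝒮)
    (hbig : s * t + t * k ≤ (Finset.univ.biUnion S).card) :
    ∃ (m : ℕ) (C : Fin m → Finset α), m ≤ (n + t - 1) / t - k ∧
      (∀ i, C i ∈ 𝒮) ∧ Finset.univ.biUnion C = U := by
  set W := univ.biUnion S
  have hWU : W ⊆ U := biUnion_subset.mpr fun i _ => hsub _ (hS i)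
  have hWn : #W ≤ n := hn ▸ card_le_card hWU
  have hceil : n ≤ t * ((n + t - 1) / t) := le_smul_ceilDiv (a := t) (b := n) ht1
  have hsW : (s + k) * t ≤ #W := by linarith
  have hsk : s + k ≤ (n + t - 1) / t :=
    Nat.le_of_mul_le_mul_left (by linarith) ht1
  have hrest : #(U \ W) ≤ ((n + t - 1) / t - k - s) * t := by
    rw [card_sdiff_of_subset hWU, hn, Nat.sub_sub, add_comm k, Nat.sub_mul, mul_comm _ t]
    omega
  obtain ⟨C, hCU, hC⟩ := exists_fin_cover_of_card_le_mul (hn ▸ htn) sdiff_subset hrest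
  refine ⟨_, Fin.append S C, by omega, ?_, ?_⟩
  · refine (Fin.forall_fin_add _).mpr ⟨fun i => ?_, fun j => ?_⟩
    · simpa using hS i
    · simpa using huniform _ (hCU j).1 (hCU j).2
  · rw [univ_biUnion_fin_append]
    exact (union_subset hWU (biUnion_subset.mpr fun j _ => (hCU j).1)).antisymm
      (sdiff_le_iff.mp hC)
end
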